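/- arXiv:1811.12492 — 2 statements merged into one kernel-verified Lean document; each statement's English description precedes it below -/
import Mathlib

section
/- For a smooth solution u of the 1D wave equation on [0,ℓ] with Dirichlet boundary conditions and initial data in H¹₀ ∩ H^s for all s, the boundary observability identity holds: ∫₀^T |∂_x u(t,ℓ)|² dt = (T/ℓ)·E(0)·(1 + O(ℓ/T)); more precisely, |∫₀^T |∂_x u(t,ℓ)|² dt − (T/ℓ)E(0)| ≤ 2·E(0) for all T > 0. -/
open MeasureTheory intervalIntegral Set RealInnerProductSpace

lemma hasDerivAt_param_integral
    {Φ Φ' : ℝ → ℝ → ℝ} (hΦ : Continuous (Function.uncurry Φ))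
    (hΦ' : Continuous (Function.uncurry Φ'))
    (hd : ∀ t x, HasDerivAt (fun s => Φ s x) (Φ' t x) t)
    (a b t₀ : ℝ) :
    HasDerivAt (fun t => ∫ x in a..b, Φ t x) (∫ x in a..b, Φ' t₀ x) t₀ := by
  obtain ⟨C, hC⟩ := ((isCompact_Icc (a := t₀ - 1) (b := t₀ + 1)).prod
      (isCompact_uIcc (a := a) (b := b))).exists_bound_of_continuousOn hΦ'.continuousOn
  refine (intervalIntegral.hasDerivAt_integral_of_dominated_loc_of_deriv_le
      (F := Φ) (F' := Φ') (x₀ := t₀) (a := a) (b := b) (μ := volume)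
      (bound := fun _ => C) (Metric.ball_mem_nhds t₀ one_pos)
      (Filter.Eventually.of_forall fun t =>
        (hΦ.comp (Continuous.prodMk_right t)).aestronglyMeasurable)
      ((hΦ.comp (Continuous.prodMk_right t₀)).intervalIntegrable a b)
      (hΦ'.comp (Continuous.prodMk_right t₀)).aestronglyMeasurable
      (Filter.Eventually.of_forall fun x hx t ht => ?_)
      intervalIntegrable_const
      (Filter.Eventually.of_forall fun x _ t _ => hd t x)).2
  refine hC (t, x) ⟨?_, uIoc_subset_uIcc hx⟩
  have := Metric.mem_ball.1 ht
  rw [Real.dist_eq] at this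
  constructor <;> [linarith [abs_lt.1 this]; linarith [abs_lt.1 this]]

lemma hasDerivAt_fst' {g : ℝ × ℝ → ℂ} (hg : ContDiff ℝ (⊤ : ℕ∞) g) (t x : ℝ) :
    HasDerivAt (fun s => g (s, x)) (fderiv ℝ g (t, x) (1, 0)) t :=
  (hg.differentiable (by simp) (t, x)).hasFDerivAt.comp_hasDerivAt t
    ((hasDerivAt_id t).prodMk (hasDerivAt_const t x))

lemma hasDerivAt_snd' {g : ℝ × ℝ → ℂ} (hg : ContDiff ℝ (⊤ : ℕ∞) g) (t x : ℝ) :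
    HasDerivAt (fun y => g (t, y)) (fderiv ℝ g (t, x) (0, 1)) x :=
  (hg.differentiable (by simp) (t, x)).hasFDerivAt.comp_hasDerivAt x
    ((hasDerivAt_const x t).prodMk (hasDerivAt_id x))

set_option maxHeartbeats 1000000 in
/-- Boundary observability identity for the 1D wave equation on `[0, ℓ]`
with Dirichlet boundary conditions:
`|∫₀^T |∂_x u(t,ℓ)|² dt − (T/ℓ) E(0)| ≤ 2 E(0)` for every `T > 0`. -/
theorem observability_1D
    (ℓ : ℝ) (hℓ : 0 < ℓ)
    (u : ℝ → ℝ → ℂ)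
    (hu : ContDiff ℝ (⊤ : ℕ∞) (Function.uncurry u))
    (hwave : ∀ t x,
      deriv (fun s => deriv (fun s' => u s' x) s) t
        = deriv (fun y => deriv (fun y' => u t y') y) x)
    (hbc : ∀ t, u t 0 = 0 ∧ u t ℓ = 0)
    (E0 : ℝ)
    (hE0 : E0 = ∫ x in (0:ℝ)..ℓ,
      ‖deriv (fun s => u s x) 0‖^2 + ‖deriv (fun y => u 0 y) x‖^2) :
    ∀ T > 0,
      |(∫ t in (0:ℝ)..T, ‖deriv (fun y => u t y) ℓ‖^2) - (T / ℓ) * E0|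
        ≤ 2 * E0 := by
  intro T hT
  set f := Function.uncurry u with hf_def
  set v : ℝ × ℝ → ℂ := fun p => fderiv ℝ f p (1, 0) with hv_def
  set w : ℝ × ℝ → ℂ := fun p => fderiv ℝ f p (0, 1) with hw_def
  have hfd : ContDiff ℝ (⊤ : ℕ∞) (fderiv ℝ f) := hu.fderiv_right (by simp)
  have hv : ContDiff ℝ (⊤ : ℕ∞) v := hfd.clm_apply contDiff_const
  have hw : ContDiff ℝ (⊤ : ℕ∞) w := hfd.clm_apply contDiff_const
  -- first partial derivatives of u
  have hder_t : ∀ t x, HasDerivAt (fun s => u s x) (v (t, x)) t :=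
    fun t x => hasDerivAt_fst' hu t x
  have hder_x : ∀ t x, HasDerivAt (fun y => u t y) (w (t, x)) x :=
    fun t x => hasDerivAt_snd' hu t x
  -- second partial derivatives
  set vt : ℝ × ℝ → ℂ := fun p => fderiv ℝ v p (1, 0) with hvt_def
  set vx : ℝ × ℝ → ℂ := fun p => fderiv ℝ v p (0, 1) with hvx_def
  set wt : ℝ × ℝ → ℂ := fun p => fderiv ℝ w p (1, 0) with hwt_def
  set wx : ℝ × ℝ → ℂ := fun p => fderiv ℝ w p (0, 1) with hwx_def
  have hvt : ContDiff ℝ (⊤ : ℕ∞) vt := (hv.fderiv_right (by simp)).clm_apply contDiff_const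
  have hvx : ContDiff ℝ (⊤ : ℕ∞) vx := (hv.fderiv_right (by simp)).clm_apply contDiff_const
  have hwt : ContDiff ℝ (⊤ : ℕ∞) wt := (hw.fderiv_right (by simp)).clm_apply contDiff_const
  have hwx : ContDiff ℝ (⊤ : ℕ∞) wx := (hw.fderiv_right (by simp)).clm_apply contDiff_const
  -- express fderivs of v, w via the second derivative of f
  have hfv : ∀ p : ℝ × ℝ, ∀ a : ℝ × ℝ, fderiv ℝ v p a = fderiv ℝ (fderiv ℝ f) p a (1, 0) := by
    intro p a
    have : fderiv ℝ v p = (fderiv ℝ (fderiv ℝ f) p).flip (1, 0) := by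
      rw [hv_def]
      rw [fderiv_clm_apply (hfd.differentiable (by simp) p) (differentiableAt_const _)]
      simp
    rw [this]; rfl
  have hfw : ∀ p : ℝ × ℝ, ∀ a : ℝ × ℝ, fderiv ℝ w p a = fderiv ℝ (fderiv ℝ f) p a (0, 1) := by
    intro p a
    have : fderiv ℝ w p = (fderiv ℝ (fderiv ℝ f) p).flip (0, 1) := by
      rw [hw_def]
      rw [fderiv_clm_apply (hfd.differentiable (by simp) p) (differentiableAt_const _)]
      simp
    rw [this]; rfl
  have hsymm : ∀ p : ℝ × ℝ, ∀ a b : ℝ × ℝ,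
      fderiv ℝ (fderiv ℝ f) p a b = fderiv ℝ (fderiv ℝ f) p b a := fun p =>
    second_derivative_symmetric (fun y => (hu.differentiable (by simp) y).hasFDerivAt)
      (hfd.differentiable (by simp) p).hasFDerivAt
  -- mixed partials: ∂ₓ v = ∂ₜ w
  have hmixed : ∀ p : ℝ × ℝ, vx p = wt p := by
    intro p
    rw [hvx_def, hwt_def]
    show fderiv ℝ v p (0,1) = fderiv ℝ w p (1,0)
    rw [hfv p (0,1), hfw p (1,0), hsymm p]
  -- wave equation: ∂ₜ v = ∂ₓ w
  have hwave' : ∀ p : ℝ × ℝ, vt p = wx p := by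
    rintro ⟨t, x⟩
    have h1 : (fun s => deriv (fun s' => u s' x) s) = fun s => v (s, x) := by
      funext s; exact (hder_t s x).deriv
    have h2 : (fun y => deriv (fun y' => u t y') y) = fun y => w (t, y) := by
      funext y; exact (hder_x t y).deriv
    have := hwave t x
    rw [h1, h2, (hasDerivAt_fst' hv t x).deriv, (hasDerivAt_snd' hw t x).deriv] at this
    exact this
  -- boundary values
  have hv0 : ∀ t, v (t, 0) = 0 := by
    intro t
    have : (fun s => u s 0) = fun _ => (0 : ℂ) := funext fun s => (hbc s).1
    rw [← (hder_t t 0).deriv, this, deriv_const]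
  have hvl : ∀ t, v (t, ℓ) = 0 := by
    intro t
    have : (fun s => u s ℓ) = fun _ => (0 : ℂ) := funext fun s => (hbc s).2
    rw [← (hder_t t ℓ).deriv, this, deriv_const]
  -- densities
  set e : ℝ → ℝ → ℝ := fun t x => ‖v (t, x)‖ ^ 2 + ‖w (t, x)‖ ^ 2 with he_def
  set m : ℝ → ℝ → ℝ := fun t x => (inner ℝ (v (t, x)) (w (t, x)) : ℝ) with hm_def
  set et : ℝ → ℝ → ℝ := fun t x =>
    2 * (inner ℝ (vt (t, x)) (v (t, x)) : ℝ) + 2 * (inner ℝ (wt (t, x)) (w (t, x)) : ℝ) with het_def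
  set ex : ℝ → ℝ → ℝ := fun t x =>
    2 * (inner ℝ (vx (t, x)) (v (t, x)) : ℝ) + 2 * (inner ℝ (wx (t, x)) (w (t, x)) : ℝ) with hex_def
  set mt : ℝ → ℝ → ℝ := fun t x =>
    (inner ℝ (v (t, x)) (wt (t, x)) : ℝ) + (inner ℝ (vt (t, x)) (w (t, x)) : ℝ) with hmt_def
  set mx : ℝ → ℝ → ℝ := fun t x =>
    (inner ℝ (v (t, x)) (wx (t, x)) : ℝ) + (inner ℝ (vx (t, x)) (w (t, x)) : ℝ) with hmx_def
  -- continuity of densities (jointly)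
  have hce : Continuous (Function.uncurry e) :=
    ((hv.continuous.norm.pow 2).add (hw.continuous.norm.pow 2))
  have hcm : Continuous (Function.uncurry m) := hv.continuous.inner hw.continuous
  have hcet : Continuous (Function.uncurry et) :=
    ((continuous_const.mul (hvt.continuous.inner hv.continuous)).add
      (continuous_const.mul (hwt.continuous.inner hw.continuous)))
  have hcex : Continuous (Function.uncurry ex) :=
    ((continuous_const.mul (hvx.continuous.inner hv.continuous)).add
      (continuous_const.mul (hwx.continuous.inner hw.continuous)))
  have hcmt : Continuous (Function.uncurry mt) :=
    ((hv.continuous.inner hwt.continuous).add (hvt.continuous.inner hw.continuous))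
  have hcmx : Continuous (Function.uncurry mx) :=
    ((hv.continuous.inner hwx.continuous).add (hvx.continuous.inner hw.continuous))
  -- pointwise derivatives of densities
  have hde_t : ∀ t x, HasDerivAt (fun s => e s x) (et t x) t := by
    intro t x
    have h1 : HasDerivAt (fun s => (inner ℝ (v (s, x)) (v (s, x)) : ℝ))
        ((inner ℝ (v (t, x)) (vt (t, x)) : ℝ) + (inner ℝ (vt (t, x)) (v (t, x)) : ℝ)) t :=
      (hasDerivAt_fst' hv t x).inner ℝ (hasDerivAt_fst' hv t x)
    have h2 : HasDerivAt (fun s => (inner ℝ (w (s, x)) (w (s, x)) : ℝ))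
        ((inner ℝ (w (t, x)) (wt (t, x)) : ℝ) + (inner ℝ (wt (t, x)) (w (t, x)) : ℝ)) t :=
      (hasDerivAt_fst' hw t x).inner ℝ (hasDerivAt_fst' hw t x)
    have h3 := h1.add h2
    have hfun : (fun s => (inner ℝ (v (s, x)) (v (s, x)) : ℝ) + (inner ℝ (w (s, x)) (w (s, x)) : ℝ))
        = fun s => e s x := by
      funext s; rw [he_def]; simp [real_inner_self_eq_norm_sq]
    simp only [Pi.add_def] at h3
    rw [hfun] at h3
    refine h3.congr_deriv ?_
    rw [het_def]
    simp only [real_inner_comm (v (t,x)) (vt (t,x)), real_inner_comm (w (t,x)) (wt (t,x))]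
    ring
  have hde_x : ∀ t x, HasDerivAt (fun y => e t y) (ex t x) x := by
    intro t x
    have h1 : HasDerivAt (fun y => (inner ℝ (v (t, y)) (v (t, y)) : ℝ))
        ((inner ℝ (v (t, x)) (vx (t, x)) : ℝ) + (inner ℝ (vx (t, x)) (v (t, x)) : ℝ)) x :=
      (hasDerivAt_snd' hv t x).inner ℝ (hasDerivAt_snd' hv t x)
    have h2 : HasDerivAt (fun y => (inner ℝ (w (t, y)) (w (t, y)) : ℝ))
        ((inner ℝ (w (t, x)) (wx (t, x)) : ℝ) + (inner ℝ (wx (t, x)) (w (t, x)) : ℝ)) x :=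
      (hasDerivAt_snd' hw t x).inner ℝ (hasDerivAt_snd' hw t x)
    have h3 := h1.add h2
    have hfun : (fun y => (inner ℝ (v (t, y)) (v (t, y)) : ℝ) + (inner ℝ (w (t, y)) (w (t, y)) : ℝ))
        = fun y => e t y := by
      funext y; rw [he_def]; simp [real_inner_self_eq_norm_sq]
    simp only [Pi.add_def] at h3
    rw [hfun] at h3
    refine h3.congr_deriv ?_
    rw [hex_def]
    simp only [real_inner_comm (v (t,x)) (vx (t,x)), real_inner_comm (w (t,x)) (wx (t,x))]
    ring
  have hdm_t : ∀ t x, HasDerivAt (fun s => m s x) (mt t x) t := fun t x =>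
    (hasDerivAt_fst' hv t x).inner ℝ (hasDerivAt_fst' hw t x)
  have hdm_x : ∀ t x, HasDerivAt (fun y => m t y) (mx t x) x := fun t x =>
    (hasDerivAt_snd' hv t x).inner ℝ (hasDerivAt_snd' hw t x)
  -- key pointwise identities
  have hid1 : ∀ t x, et t x = 2 * mx t x := by
    intro t x
    rw [het_def, hmx_def]
    simp only [hwave' (t, x), hmixed (t, x)]
    rw [real_inner_comm (wx (t,x)) (v (t,x))]
    ring
  have hid2 : ∀ t x, mt t x = ex t x / 2 := by
    intro t x
    rw [hmt_def, hex_def]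
    simp only [hwave' (t, x), hmixed (t, x)]
    rw [real_inner_comm (v (t,x)) (wt (t,x))]
    ring
  -- energy
  set E : ℝ → ℝ := fun t => ∫ x in (0:ℝ)..ℓ, e t x with hE_def
  have hE' : ∀ t₀, HasDerivAt E 0 t₀ := by
    intro t₀
    have h := hasDerivAt_param_integral hce hcet hde_t 0 ℓ t₀
    have hz : (∫ x in (0:ℝ)..ℓ, et t₀ x) = 0 := by
      have h1 : (∫ x in (0:ℝ)..ℓ, et t₀ x) = ∫ x in (0:ℝ)..ℓ, 2 * mx t₀ x := by
        congr 1; funext x; exact hid1 t₀ x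
      rw [h1, intervalIntegral.integral_const_mul]
      have h2 : (∫ x in (0:ℝ)..ℓ, mx t₀ x) = m t₀ ℓ - m t₀ 0 := by
        apply intervalIntegral.integral_eq_sub_of_hasDerivAt
        · intro x _; exact hdm_x t₀ x
        · exact ((hcmx.comp (Continuous.prodMk_right t₀)).intervalIntegrable 0 ℓ)
      rw [h2, hm_def]
      simp [hv0, hvl]
    rw [← hz]; exact h
  have hEconst : ∀ t, E t = E 0 := by
    have hdiff : Differentiable ℝ E := fun t => (hE' t).differentiableAt
    have hzero : ∀ t, deriv E t = 0 := fun t => (hE' t).deriv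
    intro t; exact is_const_of_deriv_eq_zero hdiff hzero t 0
  have hE0E : E 0 = E0 := by
    rw [hE0]
    apply intervalIntegral.integral_congr
    intro x _
    rw [he_def]
    simp only
    rw [(hder_t 0 x).deriv, (hder_x 0 x).deriv]
  -- multiplier functional
  set Φ : ℝ → ℝ := fun t => ∫ x in (0:ℝ)..ℓ, x * m t x with hΦ_def
  have hΦ' : ∀ t₀, HasDerivAt Φ (ℓ * e t₀ ℓ / 2 - E0 / 2) t₀ := by
    intro t₀
    have hc1 : Continuous (Function.uncurry fun t x => x * m t x) :=
      continuous_snd.mul hcm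
    have hc2 : Continuous (Function.uncurry fun t x => x * mt t x) :=
      continuous_snd.mul hcmt
    have h := hasDerivAt_param_integral hc1 hc2
      (fun t x => (hdm_t t x).const_mul x) 0 ℓ t₀
    have hval : (∫ x in (0:ℝ)..ℓ, x * mt t₀ x) = ℓ * e t₀ ℓ / 2 - E0 / 2 := by
      have hint_e : IntervalIntegrable (fun x => e t₀ x) volume 0 ℓ :=
        (hce.comp (Continuous.prodMk_right t₀)).intervalIntegrable 0 ℓ
      have hftc : (∫ x in (0:ℝ)..ℓ, (e t₀ x / 2 + x * ex t₀ x / 2))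
          = ℓ * e t₀ ℓ / 2 - 0 * e t₀ 0 / 2 := by
        apply intervalIntegral.integral_eq_sub_of_hasDerivAt (f := fun y => y * e t₀ y / 2)
        · intro x _
          have := ((hasDerivAt_id x).mul (hde_x t₀ x)).div_const 2
          refine this.congr_deriv ?_
          simp only [id_eq]
          ring
        · apply Continuous.intervalIntegrable
          exact ((hce.comp (Continuous.prodMk_right t₀)).div_const 2).add
            ((continuous_id.mul (hcex.comp (Continuous.prodMk_right t₀))).div_const 2)
      have hsplit : (∫ x in (0:ℝ)..ℓ, (e t₀ x / 2 + x * ex t₀ x / 2))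
          = (∫ x in (0:ℝ)..ℓ, e t₀ x / 2) + ∫ x in (0:ℝ)..ℓ, x * ex t₀ x / 2 := by
        apply intervalIntegral.integral_add
        · exact hint_e.div_const 2
        · apply Continuous.intervalIntegrable
          exact (continuous_id.mul (hcex.comp (Continuous.prodMk_right t₀))).div_const 2
      have hmt_eq : (∫ x in (0:ℝ)..ℓ, x * mt t₀ x) = ∫ x in (0:ℝ)..ℓ, x * ex t₀ x / 2 := by
        congr 1; funext x; rw [hid2 t₀ x]; ring
      have hEhalf : (∫ x in (0:ℝ)..ℓ, e t₀ x / 2) = E0 / 2 := by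
        rw [intervalIntegral.integral_div]
        rw [← hE0E, ← hEconst t₀]
      rw [hmt_eq]
      have := hsplit.symm.trans hftc
      rw [hEhalf] at this
      linarith
    rw [← hval]; exact h
  -- |Φ t| ≤ ℓ * E0 / 2
  have hΦbound : ∀ t, |Φ t| ≤ ℓ * E0 / 2 := by
    intro t
    have h1 : |Φ t| ≤ ∫ x in (0:ℝ)..ℓ, |x * m t x| := by
      rw [hΦ_def]
      exact intervalIntegral.abs_integral_le_integral_abs hℓ.le
    have h2 : (∫ x in (0:ℝ)..ℓ, |x * m t x|) ≤ ∫ x in (0:ℝ)..ℓ, ℓ * (e t x / 2) := by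
      apply intervalIntegral.integral_mono_on hℓ.le
      · exact ((continuous_id.mul (hcm.comp (Continuous.prodMk_right t))).abs).intervalIntegrable 0 ℓ
      · exact (continuous_const.mul ((hce.comp (Continuous.prodMk_right t)).div_const 2)).intervalIntegrable 0 ℓ
      · intro x hx
        have hxm : |m t x| ≤ e t x / 2 := by
          have := abs_real_inner_le_norm (v (t, x)) (w (t, x))
          have h2 := two_mul_le_add_sq ‖v (t, x)‖ ‖w (t, x)‖
          rw [hm_def, he_def]
          simp only
          nlinarith [this]
        calc |x * m t x| = |x| * |m t x| := abs_mul _ _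
          _ = x * |m t x| := by rw [abs_of_nonneg hx.1]
          _ ≤ ℓ * (e t x / 2) := by
              apply mul_le_mul hx.2 hxm (abs_nonneg _) hℓ.le
    have h3 : (∫ x in (0:ℝ)..ℓ, ℓ * (e t x / 2)) = ℓ * E0 / 2 := by
      rw [intervalIntegral.integral_const_mul]
      have : (∫ x in (0:ℝ)..ℓ, e t x / 2) = E t / 2 := intervalIntegral.integral_div _ _
      rw [this, hEconst t, hE0E]; ring
    calc |Φ t| ≤ _ := h1
      _ ≤ _ := h2
      _ = _ := h3
  -- E0 ≥ 0
  have hE0nonneg : 0 ≤ E0 := by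
    rw [← hE0E, hE_def]
    apply intervalIntegral.integral_nonneg hℓ.le
    intro x _
    positivity
  -- FTC in time for Φ
  have hpair : Continuous fun t : ℝ => ((t, ℓ) : ℝ × ℝ) := by fun_prop
  have hcel : Continuous fun t => e t ℓ := by
    have h1 : Continuous fun t : ℝ => v (t, ℓ) := hv.continuous.comp hpair
    have h2 : Continuous fun t : ℝ => w (t, ℓ) := hw.continuous.comp hpair
    simp only [he_def]
    exact (h1.norm.pow 2).add (h2.norm.pow 2)
  have hFTC : (∫ t in (0:ℝ)..T, (ℓ * e t ℓ / 2 - E0 / 2)) = Φ T - Φ 0 := by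
    apply intervalIntegral.integral_eq_sub_of_hasDerivAt
    · intro t _; exact hΦ' t
    · apply Continuous.intervalIntegrable
      exact ((continuous_const.mul hcel).div_const 2).sub continuous_const
  -- rewrite the goal integrand
  have hgoal_int : (∫ t in (0:ℝ)..T, ‖deriv (fun y => u t y) ℓ‖ ^ 2)
      = ∫ t in (0:ℝ)..T, e t ℓ := by
    apply intervalIntegral.integral_congr
    intro t _
    show ‖deriv (fun y => u t y) ℓ‖ ^ 2 = e t ℓ
    rw [(hder_x t ℓ).deriv]
    simp only [he_def]
    rw [hvl t]
    simp
  -- put it together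
  have hsplit2 : (∫ t in (0:ℝ)..T, (ℓ * e t ℓ / 2 - E0 / 2))
      = (ℓ / 2) * (∫ t in (0:ℝ)..T, e t ℓ) - T * (E0 / 2) := by
    have hint : IntervalIntegrable (fun t => ℓ * e t ℓ / 2) volume 0 T := by
      apply Continuous.intervalIntegrable
      exact (continuous_const.mul hcel).div_const 2
    rw [intervalIntegral.integral_sub hint intervalIntegrable_const]
    rw [intervalIntegral.integral_const]
    have : (∫ t in (0:ℝ)..T, ℓ * e t ℓ / 2) = (ℓ / 2) * ∫ t in (0:ℝ)..T, e t ℓ := by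
      rw [← intervalIntegral.integral_const_mul]
      congr 1; funext t; ring
    rw [this]
    simp [smul_eq_mul]
    try ring
  have key : (∫ t in (0:ℝ)..T, e t ℓ) - (T / ℓ) * E0 = (2 / ℓ) * (Φ T - Φ 0) := by
    have := hsplit2.symm.trans hFTC
    field_simp at this ⊢
    linarith
  rw [hgoal_int, key]
  have : |(2 / ℓ) * (Φ T - Φ 0)| = (2 / ℓ) * |Φ T - Φ 0| := by
    rw [abs_mul, abs_of_nonneg (by positivity : (0:ℝ) ≤ 2 / ℓ)]
  rw [this]
  have habs : |Φ T - Φ 0| ≤ ℓ * E0 / 2 + ℓ * E0 / 2 :=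
    (abs_sub _ _).trans (add_le_add (hΦbound T) (hΦbound 0))
  calc (2 / ℓ) * |Φ T - Φ 0| ≤ (2 / ℓ) * (ℓ * E0 / 2 + ℓ * E0 / 2) := by
        apply mul_le_mul_of_nonneg_left habs (by positivity)
    _ = 2 * E0 := by field_simp; ring
end

section
/- Poincaré-type inequality on a triangle with only the x-derivative: if Ω is the triangle with vertices (0,0), (ℓ, −a₁), (ℓ, a₂) (with ℓ, a₁, a₂ > 0) and u ∈ C¹(Ω̄) vanishes on ∂Ω, then ‖u‖_{L²(Ω)} ≤ ℓ·√(e−1)·‖∂_x u‖_{L²(Ω)}. -/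
open MeasureTheory Real

lemma cs_interval (f : ℝ → ℝ) (hf : Continuous f) {a b : ℝ} (hab : a ≤ b) :
    (∫ t in a..b, f t) ^ 2 ≤ (b - a) * ∫ t in a..b, (f t) ^ 2 := by
  rcases eq_or_lt_of_le hab with rfl | h
  · simp
  · set lam : ℝ := (∫ t in a..b, f t) / (b - a) with hlam
    have key : (0:ℝ) ≤ ∫ t in a..b, (f t - lam) ^ 2 :=
      intervalIntegral.integral_nonneg hab (fun _ _ => sq_nonneg _)
    have hint : IntervalIntegrable f volume a b := hf.intervalIntegrable a b
    have hint2 : IntervalIntegrable (fun t => (f t)^2) volume a b :=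
      (hf.pow 2).intervalIntegrable a b
    have expand : ∫ t in a..b, (f t - lam) ^ 2
        = (∫ t in a..b, (f t)^2) - 2 * lam * (∫ t in a..b, f t) + (b - a) * lam^2 := by
      have : ∀ t, (f t - lam)^2 = (f t)^2 - (2*lam) * f t + lam^2 := by intro t; ring
      simp_rw [this]
      rw [intervalIntegral.integral_add ((hint2.sub (hint.const_mul _))) intervalIntegrable_const,
        intervalIntegral.integral_sub hint2 (hint.const_mul _),
        intervalIntegral.integral_const_mul, intervalIntegral.integral_const, smul_eq_mul]
    rw [expand] at key
    have hb : 0 < b - a := by linarith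
    rw [hlam] at key
    have h2 : (b - a) * ((∫ t in a..b, f t) / (b - a))^2
        = (∫ t in a..b, f t)^2 / (b-a) := by field_simp
    rw [h2] at key
    have h3 : 2 * ((∫ t in a..b, f t) / (b - a)) * (∫ t in a..b, f t)
        = 2 * (∫ t in a..b, f t)^2 / (b-a) := by field_simp
    rw [h3] at key
    have h4 : (∫ t in a..b, f t)^2 / (b-a) ≤ ∫ t in a..b, (f t)^2 := by
      linarith [(by ring : 2 * (∫ t in a..b, f t)^2/(b-a) = 2*((∫ t in a..b, f t)^2/(b-a)))]
    have h5 := (div_le_iff₀ hb).mp h4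
    linarith

/-- Poincaré-type inequality on the triangle with vertices `(0,0)`, `(ℓ,−a₁)`,
`(ℓ,a₂)`, involving only the `x`-derivative:
`‖u‖_{L²(Ω)} ≤ ℓ √(e−1) ‖∂_x u‖_{L²(Ω)}` for `u` vanishing on `∂Ω`. -/
theorem poincare_triangle
    (ℓ a₁ a₂ : ℝ) (hℓ : 0 < ℓ) (ha₁ : 0 < a₁) (ha₂ : 0 < a₂)
    (Ω : Set (ℝ × ℝ))
    (hΩ : Ω = {p : ℝ × ℝ | 0 ≤ p.1 ∧ p.1 ≤ ℓ ∧
      -(a₁ / ℓ) * p.1 ≤ p.2 ∧ p.2 ≤ (a₂ / ℓ) * p.1})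
    (u : ℝ × ℝ → ℂ)
    (hu : ContDiff ℝ 1 u)
    (hbc : ∀ p ∈ frontier Ω, u p = 0) :
    Real.sqrt (∫ p in Ω, ‖u p‖^2)
      ≤ ℓ * Real.sqrt (Real.exp 1 - 1) *
        Real.sqrt (∫ p in Ω, ‖deriv (fun x => u (x, p.2)) p.1‖^2) := by
  -- the partial derivative in the `x` direction
  set D : ℝ × ℝ → ℂ := fun p => deriv (fun x => u (x, p.2)) p.1 with hD
  have hud : Differentiable ℝ u := hu.differentiable one_ne_zero
  have hDeriv : ∀ p : ℝ × ℝ, HasDerivAt (fun s => u (s, p.2)) (fderiv ℝ u p (1, 0)) p.1 := by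
    intro p
    have h1 : HasDerivAt (fun s : ℝ => (s, p.2)) ((1:ℝ), (0:ℝ)) p.1 :=
      (hasDerivAt_id p.1).prodMk (hasDerivAt_const p.1 p.2)
    exact ((hud p).hasFDerivAt).comp_hasDerivAt p.1 h1
  have hDval : ∀ p : ℝ × ℝ, D p = fderiv ℝ u p (1, 0) := fun p => (hDeriv p).deriv
  have hDcont : Continuous D := by
    have hc : Continuous (fderiv ℝ u) := hu.continuous_fderiv one_ne_zero
    have : Continuous fun p : ℝ × ℝ => fderiv ℝ u p (1, 0) := hc.clm_apply continuous_const
    simpa only [funext hDval] using this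
  have hDAt : ∀ p : ℝ × ℝ, HasDerivAt (fun s => u (s, p.2)) (D (p.1, p.2)) p.1 := by
    intro p; rw [show (p.1, p.2) = p from rfl]; rw [hDval p]; exact hDeriv p
  -- Ω is closed, measurable, compact
  have hΩclosed : IsClosed Ω := by
    rw [hΩ]
    have h1 : IsClosed {p : ℝ × ℝ | 0 ≤ p.1} := isClosed_le continuous_const continuous_fst
    have h2 : IsClosed {p : ℝ × ℝ | p.1 ≤ ℓ} := isClosed_le continuous_fst continuous_const
    have h3 : IsClosed {p : ℝ × ℝ | -(a₁ / ℓ) * p.1 ≤ p.2} :=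
      isClosed_le (continuous_const.mul continuous_fst) continuous_snd
    have h4 : IsClosed {p : ℝ × ℝ | p.2 ≤ (a₂ / ℓ) * p.1} :=
      isClosed_le continuous_snd (continuous_const.mul continuous_fst)
    simp only [Set.setOf_and]
    exact h1.inter (h2.inter (h3.inter h4))
  have hΩmeas : MeasurableSet Ω := hΩclosed.measurableSet
  have hΩsub : Ω ⊆ Set.Icc 0 ℓ ×ˢ Set.Icc (-a₁) a₂ := by
    rw [hΩ]
    rintro ⟨x, y⟩ ⟨hx0, hxl, h1, h2⟩
    simp only [Set.mem_prod, Set.mem_Icc] at *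
    refine ⟨⟨hx0, hxl⟩, ?_, ?_⟩
    · have : -(a₁ / ℓ) * ℓ ≤ -(a₁ / ℓ) * x := by
        apply mul_le_mul_of_nonpos_left hxl
        have : 0 < a₁ / ℓ := div_pos ha₁ hℓ
        linarith
      have he : -(a₁ / ℓ) * ℓ = -a₁ := by field_simp
      linarith
    · have : (a₂ / ℓ) * x ≤ (a₂ / ℓ) * ℓ := by
        apply mul_le_mul_of_nonneg_left hxl (le_of_lt (div_pos ha₂ hℓ))
      have he : (a₂ / ℓ) * ℓ = a₂ := by field_simp
      linarith
  have hΩcomp : IsCompact Ω :=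
    (isCompact_Icc.prod isCompact_Icc).of_isClosed_subset hΩclosed hΩsub
  -- the left endpoint of the horizontal slice at height y
  set x₀ : ℝ → ℝ := fun y => if 0 ≤ y then ℓ * y / a₂ else -(ℓ * y) / a₁ with hx₀def
  have hx₀0 : ∀ y, 0 ≤ x₀ y := by
    intro y; simp only [hx₀def]; split_ifs with hy
    · positivity
    · push_neg at hy
      have : 0 < -(ℓ * y) := by nlinarith
      positivity
  have hx₀ℓ : ∀ y ∈ Set.Icc (-a₁) a₂, x₀ y ≤ ℓ := by
    rintro y ⟨hy1, hy2⟩; simp only [hx₀def]; split_ifs with hy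
    · rw [div_le_iff₀ ha₂]; nlinarith
    · rw [div_le_iff₀ ha₁]; nlinarith
  have hmem : ∀ x y, ((x, y) ∈ Ω) ↔ (x₀ y ≤ x ∧ x ≤ ℓ) := by
    intro x y
    rw [hΩ]
    simp only [hx₀def, Set.mem_setOf_eq]
    split_ifs with hy
    · constructor
      · rintro ⟨hx0, hxl, h1, h2⟩
        refine ⟨?_, hxl⟩
        rw [div_le_iff₀ ha₂]
        have h2' := mul_le_mul_of_nonneg_left h2 hℓ.le
        have he : ℓ * (a₂ / ℓ * x) = x * a₂ := by field_simp
        linarith [he ▸ h2']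
      · rintro ⟨hx1, hx2⟩
        have hx0 : 0 ≤ x := le_trans (by positivity) hx1
        refine ⟨hx0, hx2, ?_, ?_⟩
        · have : 0 < a₁ / ℓ := div_pos ha₁ hℓ
          nlinarith
        · have h := (div_le_iff₀ ha₂).mp hx1
          rw [show (a₂ / ℓ * x) = a₂ * x / ℓ by ring, le_div_iff₀ hℓ]
          linarith
    · push_neg at hy
      constructor
      · rintro ⟨hx0, hxl, h1, h2⟩
        refine ⟨?_, hxl⟩
        rw [div_le_iff₀ ha₁]
        have h1' := mul_le_mul_of_nonneg_left h1 hℓ.le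
        have he : ℓ * (-(a₁ / ℓ) * x) = -(a₁ * x) := by field_simp
        nlinarith [he ▸ h1']
      · rintro ⟨hx1, hx2⟩
        have h0 : 0 ≤ -(ℓ * y) / a₁ := by
          apply div_nonneg _ ha₁.le; nlinarith
        have hx0 : 0 ≤ x := le_trans h0 hx1
        refine ⟨hx0, hx2, ?_, ?_⟩
        · have h := (div_le_iff₀ ha₁).mp hx1
          have heq : -(a₁ / ℓ) * x = -(a₁ * x / ℓ) := by ring
          rw [heq, neg_le, le_div_iff₀ hℓ]
          nlinarith
        · have : 0 < a₂ / ℓ := div_pos ha₂ hℓ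
          nlinarith
  -- left endpoints are on the frontier, so u vanishes there
  have hleft : ∀ y ∈ Set.Icc (-a₁) a₂, u (x₀ y, y) = 0 := by
    intro y hy
    apply hbc
    rw [hΩclosed.frontier_eq]
    refine ⟨(hmem _ _).2 ⟨le_refl _, hx₀ℓ y hy⟩, ?_⟩
    intro hint
    obtain ⟨ε, hε, hball⟩ := Metric.mem_nhds_iff.mp (mem_interior_iff_mem_nhds.mp hint)
    have hq : ((x₀ y - ε / 2, y) : ℝ × ℝ) ∈ Metric.ball ((x₀ y, y) : ℝ × ℝ) ε := by
      rw [Metric.mem_ball, Prod.dist_eq]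
      simp only [Real.dist_eq]
      rw [show x₀ y - ε / 2 - x₀ y = -(ε/2) by ring, abs_neg, sub_self, abs_zero]
      rw [abs_of_pos (by linarith)]
      simp only [max_eq_left (by linarith : (0:ℝ) ≤ ε/2)]
      linarith
    have := (hmem _ _).1 (hball hq)
    linarith [this.1]
  -- continuity facts for slices
  have hslice_contD : ∀ y : ℝ, Continuous fun t => D (t, y) := by
    intro y; exact hDcont.comp (continuous_id.prodMk continuous_const)
  have hslice_contU : ∀ y : ℝ, Continuous fun t => u (t, y) := by
    intro y; exact hu.continuous.comp (continuous_id.prodMk continuous_const)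
  -- pointwise bound on each slice
  have hpt : ∀ y ∈ Set.Icc (-a₁) a₂, ∀ x ∈ Set.Icc (x₀ y) ℓ,
      ‖u (x, y)‖^2 ≤ ℓ * ∫ t in (x₀ y)..ℓ, ‖D (t, y)‖^2 := by
    intro y hy x hx
    obtain ⟨hx1, hx2⟩ := hx
    have hK0 : 0 ≤ ∫ t in (x₀ y)..ℓ, ‖D (t, y)‖^2 :=
      intervalIntegral.integral_nonneg (hx₀ℓ y hy) (fun _ _ => by positivity)
    have hrep : u (x, y) = ∫ t in (x₀ y)..x, D (t, y) := by
      have hftc := intervalIntegral.integral_eq_sub_of_hasDerivAt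
        (f := fun s => u (s, y)) (f' := fun t => D (t, y))
        (fun t _ => hDAt (t, y)) (((hslice_contD y)).intervalIntegrable (x₀ y) x)
      simp only [hleft y hy, sub_zero] at hftc
      exact hftc.symm
    have h1 : ‖u (x, y)‖ ≤ ∫ t in (x₀ y)..x, ‖D (t, y)‖ := by
      rw [hrep]; exact intervalIntegral.norm_integral_le_integral_norm hx1
    have h0 : (0:ℝ) ≤ ∫ t in (x₀ y)..x, ‖D (t, y)‖ :=
      intervalIntegral.integral_nonneg hx1 (fun _ _ => norm_nonneg _)
    have h2 : ‖u (x, y)‖^2 ≤ (∫ t in (x₀ y)..x, ‖D (t, y)‖)^2 := by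
      nlinarith [norm_nonneg (u (x, y))]
    have h3 := cs_interval (fun t => ‖D (t, y)‖) ((hslice_contD y).norm) hx1
    have h4 : ∫ t in (x₀ y)..x, ‖D (t, y)‖^2 ≤ ∫ t in (x₀ y)..ℓ, ‖D (t, y)‖^2 := by
      have hadd := intervalIntegral.integral_add_adjacent_intervals
        (μ := volume) (f := fun t => ‖D (t, y)‖^2) (a := x₀ y) (b := x) (c := ℓ)
        (((hslice_contD y).norm.pow 2).intervalIntegrable _ _)
        (((hslice_contD y).norm.pow 2).intervalIntegrable _ _)
      have h5 : (0:ℝ) ≤ ∫ t in x..ℓ, ‖D (t, y)‖^2 :=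
        intervalIntegral.integral_nonneg hx2 (fun _ _ => by positivity)
      linarith [hadd]
    have h6 : (0:ℝ) ≤ ∫ t in (x₀ y)..x, ‖D (t, y)‖^2 :=
      intervalIntegral.integral_nonneg hx1 (fun _ _ => by positivity)
    have hxb : x - x₀ y ≤ ℓ := by have := hx₀0 y; linarith
    nlinarith
  -- indicator functions
  set G : ℝ × ℝ → ℝ := Ω.indicator (fun p => ‖u p‖^2) with hG
  set H : ℝ × ℝ → ℝ := Ω.indicator (fun p => ‖D p‖^2) with hH
  have hGint : Integrable G := by
    rw [hG, integrable_indicator_iff hΩmeas]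
    exact ((hu.continuous.norm.pow 2)).continuousOn.integrableOn_compact hΩcomp
  have hHint : Integrable H := by
    rw [hH, integrable_indicator_iff hΩmeas]
    exact ((hDcont.norm.pow 2)).continuousOn.integrableOn_compact hΩcomp
  -- slice integral bound
  have hslice : ∀ y : ℝ, (∫ x, G (x, y)) ≤ ℓ^2 * ∫ x, H (x, y) := by
    intro y
    by_cases hy : y ∈ Set.Icc (-a₁) a₂
    · have hGeq : (fun x => G (x, y)) = (Set.Icc (x₀ y) ℓ).indicator (fun x => ‖u (x, y)‖^2) := by
        funext x
        rw [hG]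
        by_cases hmemx : (x, y) ∈ Ω
        · rw [Set.indicator_of_mem hmemx, Set.indicator_of_mem (by
            rw [Set.mem_Icc]; exact (hmem x y).1 hmemx)]
        · rw [Set.indicator_of_notMem hmemx, Set.indicator_of_notMem (by
            rw [Set.mem_Icc]; exact fun hc => hmemx ((hmem x y).2 hc))]
      have hHeq : (fun x => H (x, y)) = (Set.Icc (x₀ y) ℓ).indicator (fun x => ‖D (x, y)‖^2) := by
        funext x
        rw [hH]
        by_cases hmemx : (x, y) ∈ Ω
        · rw [Set.indicator_of_mem hmemx, Set.indicator_of_mem (by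
            rw [Set.mem_Icc]; exact (hmem x y).1 hmemx)]
        · rw [Set.indicator_of_notMem hmemx, Set.indicator_of_notMem (by
            rw [Set.mem_Icc]; exact fun hc => hmemx ((hmem x y).2 hc))]
      rw [hGeq, hHeq, integral_indicator measurableSet_Icc, integral_indicator measurableSet_Icc]
      have hIccIoc : ∀ f : ℝ → ℝ, ∫ x in Set.Icc (x₀ y) ℓ, f x = ∫ x in (x₀ y)..ℓ, f x := by
        intro f
        rw [intervalIntegral.integral_of_le (hx₀ℓ y hy), integral_Icc_eq_integral_Ioc]
      rw [hIccIoc, hIccIoc]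
      set K := ∫ t in (x₀ y)..ℓ, ‖D (t, y)‖^2 with hK
      have hK0 : 0 ≤ K :=
        intervalIntegral.integral_nonneg (hx₀ℓ y hy) (fun _ _ => by positivity)
      have hb1 : ∫ x in (x₀ y)..ℓ, ‖u (x, y)‖^2 ≤ ∫ x in (x₀ y)..ℓ, (ℓ * K) := by
        apply intervalIntegral.integral_mono_on (hx₀ℓ y hy)
          (((hslice_contU y).norm.pow 2).intervalIntegrable _ _)
          intervalIntegrable_const
        exact fun x hx => hpt y hy x hx
      rw [intervalIntegral.integral_const, smul_eq_mul] at hb1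
      have : (ℓ - x₀ y) * (ℓ * K) ≤ ℓ^2 * K := by
        have h1 := hx₀0 y
        nlinarith [mul_nonneg (mul_nonneg h1 hℓ.le) hK0]
      linarith
    · have hGzero : ∀ x, G (x, y) = 0 := by
        intro x
        rw [hG, Set.indicator_of_notMem]
        intro hc
        exact hy (hΩsub hc).2
      have hH0 : 0 ≤ ∫ x, H (x, y) := by
        apply integral_nonneg
        intro x
        rw [hH]
        exact Set.indicator_nonneg (fun _ _ => by positivity) _
      simp only [hGzero]
      rw [integral_zero]
      positivity
  -- Fubini
  have hGint' : Integrable G (volume.prod volume) := by rwa [← Measure.volume_eq_prod]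
  have hHint' : Integrable H (volume.prod volume) := by rwa [← Measure.volume_eq_prod]
  have hGy : Integrable (fun y => ∫ x, G (x, y)) := hGint'.swap.integral_prod_left
  have hHy : Integrable (fun y => ∫ x, H (x, y)) := hHint'.swap.integral_prod_left
  have h1 : ∫ p in Ω, ‖u p‖^2 = ∫ y, ∫ x, G (x, y) := by
    rw [← integral_indicator hΩmeas, ← hG, Measure.volume_eq_prod]
    exact integral_prod_symm G hGint'
  have h2 : ∫ p in Ω, ‖D p‖^2 = ∫ y, ∫ x, H (x, y) := by
    rw [← integral_indicator hΩmeas, ← hH, Measure.volume_eq_prod]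
    exact integral_prod_symm H hHint'
  have hAB : ∫ p in Ω, ‖u p‖^2 ≤ ℓ^2 * ∫ p in Ω, ‖D p‖^2 := by
    rw [h1, h2, ← integral_const_mul]
    exact integral_mono hGy (hHy.const_mul _) hslice
  -- conclusion
  have hB0 : 0 ≤ ∫ p in Ω, ‖D p‖^2 :=
    setIntegral_nonneg hΩmeas (fun p _ => by positivity)
  have hgoal : (∫ p in Ω, ‖deriv (fun x => u (x, p.2)) p.1‖^2) = ∫ p in Ω, ‖D p‖^2 := rfl
  rw [hgoal]
  have hs1 : Real.sqrt (∫ p in Ω, ‖u p‖^2) ≤ Real.sqrt (ℓ^2 * ∫ p in Ω, ‖D p‖^2) :=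
    Real.sqrt_le_sqrt hAB
  have hs2 : Real.sqrt (ℓ^2 * ∫ p in Ω, ‖D p‖^2) = ℓ * Real.sqrt (∫ p in Ω, ‖D p‖^2) := by
    rw [Real.sqrt_mul (by positivity), Real.sqrt_sq hℓ.le]
  have hs3 : (1:ℝ) ≤ Real.sqrt (Real.exp 1 - 1) := by
    rw [Real.one_le_sqrt]
    have := Real.add_one_le_exp (1:ℝ)
    linarith
  have hs4 : 0 ≤ Real.sqrt (∫ p in Ω, ‖D p‖^2) := Real.sqrt_nonneg _
  nlinarith [hs1, hs2, mul_nonneg (mul_nonneg hℓ.le hs4) (sub_nonneg.mpr hs3)]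
end
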